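/- arXiv:1002.0094 — 2 statements merged into one kernel-verified Lean document; each statement's English description precedes it below -/
import Mathlib

section
/- Define, for even nonzero integers n, α(n) as the largest k ∈ ℕ such that 2^k divides n, and points a_n^± = n ± 1/(α(n)+1)^2. Let μ = Σ_{n ∈ 2ℤ\{0}} α(n)(δ_{a_n^+} − δ_{a_n^−}). Then μ does not satisfy the uniform local boundedness condition: sup_{c ∈ ℝ} |μ|(B(c,1)) = ∞; hence μ is not an almost periodic measure in the weak sense. -/
/-!
The atoms `a_n^±` lie within `1/4` of `n`, so the unit ball around `n = 2^k` carries variation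
at least `α(2^k) = k`.

For the weak almost periodicity, test against `φ(t) = max 0 (1 - |2t|^{1/4})`, supported in
`[-1/2, 1/2]`. The function `F x = Σ α(n) (φ(x + a_n^+) - φ(x + a_n^-))` is locally a finite sum
with terms at most `α(n)`, hence bounded on bounded sets. At `x = -a_n^+` only the `n`-th term
survives, and it equals `α (1 - φ(-2/(α+1)²)) = α √(2/(α+1)) ≥ √α` with `α = α(n)`; the quartic
root is what makes this unbounded along `n = 2^k`. But a Bohr almost periodic function that is
bounded on a ball whose radius witnesses the relative density of its `1`-almost periods is bounded.
-/
open Metric Set MeasureTheory Classical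

/-- A set is relatively dense if some radius `R` works: every ball of radius `R` meets it. -/
def RelativelyDense {E : Type*} [PseudoMetricSpace E] (S : Set E) : Prop :=
  ∃ R : ℝ, 0 < R ∧ ∀ c : E, ∃ τ ∈ S, dist τ c < R

/-- Bohr almost periodicity: for every `ε > 0` the set of `ε`-almost periods is relatively dense. -/
def AlmostPeriodic {E : Type*} [SeminormedAddCommGroup E] (f : E → ℝ) : Prop :=
  ∀ ε : ℝ, 0 < ε → RelativelyDense {τ : E | ∀ x : E, |f (x + τ) - f x| < ε}

/-- The index set: even nonzero integers. -/
def EvenNZ : Type := {n : ℤ // n ≠ 0 ∧ (2 : ℤ) ∣ n}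

/-- `α(n)`: the largest `k` with `2^k ∣ n` (the 2-adic valuation). -/
noncomputable def alphaVal (n : EvenNZ) : ℕ := padicValInt 2 n.1

noncomputable def aplus (n : EvenNZ) : ℝ := (n.1 : ℝ) + 1 / ((alphaVal n : ℝ) + 1) ^ 2

noncomputable def aminus (n : EvenNZ) : ℝ := (n.1 : ℝ) - 1 / ((alphaVal n : ℝ) + 1) ^ 2

theorem AlmostPeriodic.bddAbove_range {E : Type*} [SeminormedAddCommGroup E] {f : E → ℝ}
    (hf : AlmostPeriodic f) (hbdd : ∀ R, BddAbove (f '' closedBall 0 R)) :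
    BddAbove (range f) := by
  obtain ⟨R, -, hR⟩ := hf 1 one_pos
  obtain ⟨B, hB⟩ := hbdd R
  refine ⟨B + 1, ?_⟩
  rintro _ ⟨x, rfl⟩
  obtain ⟨τ, hτ, hdist⟩ := hR x
  have hclose := hτ (x - τ)
  rw [sub_add_cancel] at hclose
  have hmem : x - τ ∈ closedBall 0 R := by
    rw [mem_closedBall, dist_zero_right, ← dist_eq_norm, dist_comm]
    exact hdist.le
  have hle : f (x - τ) ≤ B := hB (mem_image_of_mem f hmem)
  linarith [(abs_lt.mp hclose).2]

noncomputable def rootTent (t : ℝ) : ℝ := max 0 (1 - √(√|2 * t|))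

lemma continuous_rootTent : Continuous rootTent := by unfold rootTent; fun_prop

lemma rootTent_nonneg (t : ℝ) : 0 ≤ rootTent t := le_max_left _ _

lemma rootTent_le_one (t : ℝ) : rootTent t ≤ 1 :=
  max_le zero_le_one (sub_le_self _ (Real.sqrt_nonneg _))

lemma rootTent_zero : rootTent 0 = 1 := by simp [rootTent]

lemma rootTent_eq_zero {t : ℝ} (ht : 1 / 2 ≤ |t|) : rootTent t = 0 := by
  have h : 1 ≤ √(√|2 * t|) := by
    rw [Real.one_le_sqrt, Real.one_le_sqrt, abs_mul, abs_two]; linarith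
  exact max_eq_left (by linarith)

lemma one_sub_rootTent {t : ℝ} (ht : |2 * t| ≤ 1) : 1 - rootTent t = √(√|2 * t|) := by
  have h : √(√|2 * t|) ≤ 1 := by rwa [Real.sqrt_le_one, Real.sqrt_le_one]
  rw [rootTent, max_eq_right (by linarith), sub_sub_cancel]

lemma hasCompactSupport_rootTent : HasCompactSupport rootTent := by
  refine HasCompactSupport.intro (isCompact_closedBall (0 : ℝ) (1 / 2)) fun t ht => ?_
  rw [mem_closedBall, dist_zero_right, Real.norm_eq_abs, not_le] at ht
  exact rootTent_eq_zero ht.le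

lemma sqrt_le_mul_one_sub_rootTent {a : ℝ} (ha : 1 ≤ a) :
    √a ≤ a * (1 - rootTent (-(2 / (a + 1) ^ 2))) := by
  have hpos : 0 < a + 1 := by linarith
  have h2t : |2 * -(2 / (a + 1) ^ 2)| = (2 / (a + 1)) ^ 2 := by
    rw [abs_mul, abs_neg, abs_two, abs_of_pos (by positivity), div_pow]; ring
  have hle : (2 / (a + 1)) ^ 2 ≤ 1 := by
    rw [sq_le_one_iff₀ (by positivity), div_le_one hpos]; linarith
  have hmul : a * √(2 / (a + 1)) = √(a ^ 2 * (2 / (a + 1))) := by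
    rw [Real.sqrt_mul (sq_nonneg a), Real.sqrt_sq (by linarith)]
  rw [one_sub_rootTent (h2t ▸ hle), h2t, Real.sqrt_sq (by positivity), hmul]
  refine Real.sqrt_le_sqrt ?_
  rw [← mul_div_assoc, le_div_iff₀ hpos]
  nlinarith

def twoPowSucc (k : ℕ) : EvenNZ :=
  ⟨2 ^ (k + 1), pow_ne_zero _ two_ne_zero, dvd_pow_self 2 k.succ_ne_zero⟩

lemma alphaVal_twoPowSucc (k : ℕ) : alphaVal (twoPowSucc k) = k + 1 := by
  simp [alphaVal, twoPowSucc, padicValInt, Int.natAbs_pow]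

lemma one_le_alphaVal (n : EvenNZ) : 1 ≤ alphaVal n :=
  one_le_padicValNat_of_dvd (Int.natAbs_ne_zero.mpr n.2.1) (Int.natAbs_dvd_natAbs.mpr n.2.2)

lemma inv_sq_alphaVal_le (n : EvenNZ) : 1 / ((alphaVal n : ℝ) + 1) ^ 2 ≤ 1 / 4 := by
  have h : (1 : ℝ) ≤ alphaVal n := by exact_mod_cast one_le_alphaVal n
  gcongr
  nlinarith

lemma abs_aplus_sub_le (n : EvenNZ) : |aplus n - n.1| ≤ 1 / 4 := by
  rw [aplus, add_sub_cancel_left, abs_of_pos (by positivity)]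
  exact inv_sq_alphaVal_le n

lemma abs_aminus_sub_le (n : EvenNZ) : |aminus n - n.1| ≤ 1 / 4 := by
  rw [aminus, sub_sub_cancel_left, abs_neg, abs_of_pos (by positivity)]
  exact inv_sq_alphaVal_le n

lemma two_le_abs_sub {m n : EvenNZ} (hmn : m ≠ n) : 2 ≤ |(m.1 : ℝ) - n.1| := by
  have hne : m.1 - n.1 ≠ 0 := sub_ne_zero.mpr fun h => hmn (Subtype.ext h)
  have h : (2 : ℤ) ≤ |m.1 - n.1| :=
    Int.le_of_dvd (abs_pos.mpr hne) ((dvd_abs _ _).mpr (dvd_sub m.2.2 n.2.2))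
  exact_mod_cast h

/-- `∫ φ (x + y) dμ(y)`. -/
noncomputable def convMu (φ : ℝ → ℝ) (x : ℝ) : ℝ :=
  ∑' n : EvenNZ, (alphaVal n : ℝ) * (φ (x + aplus n) - φ (x + aminus n))

section
variable {φ : ℝ → ℝ}

lemma alphaVal_mul_sub_eq_zero (hφ : ∀ t, 1 / 2 ≤ |t| → φ t = 0) {x : ℝ} {n : EvenNZ}
    (hx : 1 ≤ |x + n.1|) : (alphaVal n : ℝ) * (φ (x + aplus n) - φ (x + aminus n)) = 0 := by
  have hvanish : ∀ a : ℝ, |a - n.1| ≤ 1 / 4 → φ (x + a) = 0 := fun a ha => by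
    refine hφ _ ?_
    have h := abs_add_le (x + a) (n.1 - a)
    rw [add_add_sub_cancel, abs_sub_comm] at h
    linarith
  rw [hvanish _ (abs_aplus_sub_le n), hvanish _ (abs_aminus_sub_le n), sub_self, mul_zero]

lemma convMu_neg_aplus (hφ : ∀ t, 1 / 2 ≤ |t| → φ t = 0) (n : EvenNZ) :
    convMu φ (-aplus n) = alphaVal n * (φ 0 - φ (aminus n - aplus n)) := by
  rw [convMu, tsum_eq_single n, neg_add_cancel, neg_add_eq_sub]
  intro m hmn
  refine alphaVal_mul_sub_eq_zero hφ ?_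
  have h := abs_add_le (-aplus n + m.1) (aplus n - n.1)
  rw [show -aplus n + m.1 + (aplus n - n.1) = m.1 - n.1 by ring] at h
  linarith [two_le_abs_sub hmn, abs_aplus_sub_le n]

end

lemma not_bddAbove_range_convMu_rootTent : ¬ BddAbove (range (convMu rootTent)) := by
  rintro ⟨M, hM⟩
  obtain ⟨k, hk⟩ := exists_nat_gt (M ^ 2)
  have hpeak := convMu_neg_aplus (fun _ => rootTent_eq_zero) (twoPowSucc k)
  rw [rootTent_zero, alphaVal_twoPowSucc,
    show aminus (twoPowSucc k) - aplus (twoPowSucc k) = -(2 / ((k + 1 : ℕ) + 1) ^ 2) by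
      rw [aminus, aplus, alphaVal_twoPowSucc]; ring] at hpeak
  have hk1 : (1 : ℝ) ≤ (k + 1 : ℕ) := by exact_mod_cast k.succ_pos
  have := (sqrt_le_mul_one_sub_rootTent hk1).trans_eq hpeak.symm
  have hMk : M < √(k + 1 : ℕ) := Real.lt_sqrt_of_sq_lt (hk.trans (by push_cast; linarith))
  exact (hMk.trans_le this).not_ge (hM (mem_range_self _))

lemma bddAbove_convMu_rootTent_image_closedBall (R : ℝ) :
    BddAbove (convMu rootTent '' closedBall 0 R) := by
  have hfin : {n : EvenNZ | (n.1 : ℝ) ∈ closedBall 0 (R + 1)}.Finite := by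
    have h : Filter.Tendsto (fun n : EvenNZ => (n.1 : ℝ)) Filter.cofinite (Filter.cocompact ℝ) :=
      Int.tendsto_coe_cofinite.comp Subtype.val_injective.tendsto_cofinite
    simpa using Filter.eventually_cofinite.mp
      (h.eventually_mem (isCompact_closedBall (0 : ℝ) (R + 1)).compl_mem_cocompact)
  refine ⟨∑ n ∈ hfin.toFinset, (alphaVal n : ℝ), ?_⟩
  rintro _ ⟨x, hx, rfl⟩
  rw [mem_closedBall, Real.dist_eq, sub_zero] at hx
  rw [convMu, tsum_eq_sum (s := hfin.toFinset)]
  · refine Finset.sum_le_sum fun n _ => mul_le_of_le_one_right (Nat.cast_nonneg _) ?_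
    linarith [rootTent_le_one (x + aplus n), rootTent_nonneg (x + aminus n)]
  · intro n hn
    refine alphaVal_mul_sub_eq_zero (fun _ => rootTent_eq_zero) ?_
    replace hn : R + 1 < |(n.1 : ℝ)| := by simpa using hn
    have h := abs_add_le (x + n.1) (-x)
    rw [add_neg_cancel_comm, abs_neg] at h
    linarith

/-- `|μ|(B(c, 1))`. -/
noncomputable def totalVariationBall (c : ℝ) : ENNReal :=
  ∑' n : EvenNZ, (alphaVal n : ENNReal) *
    ((if aplus n ∈ Metric.ball c 1 then 1 else 0) + (if aminus n ∈ Metric.ball c 1 then 1 else 0))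

lemma alphaVal_le_totalVariationBall (n : EvenNZ) :
    (alphaVal n : ENNReal) ≤ totalVariationBall n.1 := by
  have hball : ∀ a : ℝ, |a - n.1| ≤ 1 / 4 → a ∈ ball (n.1 : ℝ) 1 := fun a ha => by
    rw [mem_ball, Real.dist_eq]; linarith
  refine le_trans ?_ (ENNReal.le_tsum n)
  rw [if_pos (hball _ (abs_aplus_sub_le n)), if_pos (hball _ (abs_aminus_sub_le n))]
  exact le_mul_of_one_le_right' le_self_add

/-- the signed measure `μ = Σ α(n)(δ_{a_n^+} − δ_{a_n^−})` has unbounded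
variation on unit balls, hence is not an almost periodic measure in the weak sense. -/
theorem statement13 :
    (¬ ∃ M : ENNReal, M ≠ ⊤ ∧ ∀ c : ℝ,
        (∑' n : EvenNZ, (alphaVal n : ENNReal) *
          ((if aplus n ∈ Metric.ball c 1 then 1 else 0) +
            (if aminus n ∈ Metric.ball c 1 then 1 else 0))) ≤ M) ∧
    ¬ (∀ φ : ℝ → ℝ, Continuous φ → HasCompactSupport φ →
        AlmostPeriodic fun x =>
          ∑' n : EvenNZ, (alphaVal n : ℝ) * (φ (x + aplus n) - φ (x + aminus n))) := by
  refine ⟨fun ⟨M, hM, hV⟩ => ?_, fun hAP => ?_⟩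
  · obtain ⟨k, hk⟩ := ENNReal.exists_nat_gt hM
    have hle : ((k + 1 : ℕ) : ENNReal) ≤ M := by
      rw [← alphaVal_twoPowSucc]
      exact (alphaVal_le_totalVariationBall _).trans (hV _)
    exact (hle.trans_lt hk).not_ge (by exact_mod_cast k.le_succ)
  · exact not_bddAbove_range_convMu_rootTent
      ((hAP rootTent continuous_rootTent hasCompactSupport_rootTent).bddAbove_range
        bddAbove_convMu_rootTent_image_closedBall)
end

section
/- There exists a signed almost periodic multiple discrete set A in ℝ such that neither A^+ nor A^− is an almost periodic multiple discrete set. Explicitly, A with mass +1 at a_n^+ = n + 1/(α(n)+1)^2 and mass −1 at a_n^− = n − 1/(α(n)+1)^2 for each even nonzero n (α the 2-adic valuation) is almost periodic, but A^+ and A^− are not. -/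
/-! The offsets `ε(n) = 1/(α(n)+1)²` hardly change under translation by a multiple of `2^L`:
`α(n - t) = α(n)` unless both are at least `L`, in which case both offsets are at most `1/(L+1)²`.
By uniform continuity of `φ`, these translations are almost periods of the signed sum, in which
the points `n ± ε(n)` may be extended to all of `ℤ` with `ε(n) = 0` off the even nonzero
integers, since the two terms then cancel.

For `A^±` take a narrow tent `φ`. Its sum equals `1` at the points `-a_n^±` and vanishes near `0`,
which is not an index. An almost period `τ > 1` carries the peak at `-a_2^±` near some peak
`-a_m^±`, so `τ` is close to the even integer `k = 2 - m ≠ 0`; but then it carries the peak at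
`-a_k^±` to the hole at `0`. -/

open Metric Set MeasureTheory

lemma padicValInt_sub_of_dvd_of_not_dvd {p L : ℕ} [Fact p.Prime] {n t : ℤ}
    (ht : (p : ℤ) ^ L ∣ t) (hn : ¬ (p : ℤ) ^ L ∣ n) :
    padicValInt p (n - t) = padicValInt p n := by
  have hn₀ : n ≠ 0 := by rintro rfl; exact hn (dvd_zero _)
  have hnt₀ : n - t ≠ 0 := fun h => hn (sub_eq_zero.mp h ▸ ht)
  have hle : ∀ k ≤ L, k ≤ padicValInt p (n - t) ↔ k ≤ padicValInt p n := fun k hk => by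
    have hkt : (p : ℤ) ^ k ∣ t := (pow_dvd_pow _ hk).trans ht
    simpa [padicValInt_dvd_iff, hn₀, hnt₀] using dvd_sub_left (b := n) hkt
  have hlt : padicValInt p n < L := by
    by_contra! h
    exact hn ((padicValInt_dvd_iff L n).mpr (Or.inr h))
  have hlt' : padicValInt p (n - t) < L := by
    by_contra! h
    exact absurd ((hle L le_rfl).mp h) (not_le.mpr hlt)
  exact le_antisymm ((hle _ hlt'.le).mp le_rfl) ((hle _ hlt.le).mpr le_rfl)

lemma padicValInt_two_ne_zero_iff {n : ℤ} : padicValInt 2 n ≠ 0 ↔ n ≠ 0 ∧ 2 ∣ n := by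
  have h := padicValInt_dvd_iff (p := 2) 1 n
  rw [pow_one, Nat.cast_ofNat, Nat.one_le_iff_ne_zero] at h
  constructor
  · intro hv
    refine ⟨?_, h.mpr (Or.inr hv)⟩
    rintro rfl
    exact hv padicValInt.zero
  · rintro ⟨h₀, h₂⟩
    exact (h.mp h₂).resolve_left h₀

/-- `ε(n) = 1/(α(n)+1)²` on the even nonzero integers, and `0` elsewhere (where `α(n) = 0`). -/
noncomputable def dyadicOffset (n : ℤ) : ℝ :=
  if padicValInt 2 n = 0 then 0 else 1 / ((padicValInt 2 n : ℝ) + 1) ^ 2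

lemma dyadicOffset_nonneg (n : ℤ) : 0 ≤ dyadicOffset n := by
  unfold dyadicOffset; split_ifs <;> positivity

lemma dyadicOffset_le_of_dvd {L : ℕ} {n : ℤ} (h : (2 : ℤ) ^ L ∣ n) :
    dyadicOffset n ≤ 1 / ((L : ℝ) + 1) ^ 2 := by
  unfold dyadicOffset
  split_ifs with hv
  · positivity
  · obtain h₀ | hL := (padicValInt_dvd_iff (p := 2) L n).mp (mod_cast h)
    · exact absurd (h₀ ▸ padicValInt.zero) hv
    · gcongr

lemma abs_dyadicOffset_le (n : ℤ) : |dyadicOffset n| ≤ 1 / 4 := by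
  rw [abs_of_nonneg (dyadicOffset_nonneg n)]
  unfold dyadicOffset
  split_ifs with hv
  · norm_num
  · have : (1 : ℝ) ≤ padicValInt 2 n := mod_cast Nat.one_le_iff_ne_zero.mpr hv
    calc 1 / ((padicValInt 2 n : ℝ) + 1) ^ 2 ≤ 1 / ((1 : ℝ) + 1) ^ 2 := by gcongr
      _ = 1 / 4 := by norm_num

lemma abs_dyadicOffset_sub_le {L : ℕ} {t : ℤ} (ht : (2 : ℤ) ^ L ∣ t) (n : ℤ) :
    |dyadicOffset (n - t) - dyadicOffset n| ≤ 1 / ((L : ℝ) + 1) ^ 2 := by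
  by_cases hn : (2 : ℤ) ^ L ∣ n
  · exact abs_sub_le_of_nonneg_of_le (dyadicOffset_nonneg _)
      (dyadicOffset_le_of_dvd (dvd_sub hn ht)) (dyadicOffset_nonneg _) (dyadicOffset_le_of_dvd hn)
  · have hv := padicValInt_sub_of_dvd_of_not_dvd (p := 2) (mod_cast ht) (mod_cast hn)
    rw [dyadicOffset, dyadicOffset, hv, sub_self, abs_zero]
    positivity

lemma dyadicOffset_eq_zero {n : ℤ} (h : ¬ (n ≠ 0 ∧ 2 ∣ n)) : dyadicOffset n = 0 := by
  rw [dyadicOffset, if_pos (not_not.mp (mt padicValInt_two_ne_zero_iff.mp h))]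

lemma dyadicOffset_evenNZ (n : EvenNZ) :
    dyadicOffset n.1 = 1 / ((alphaVal n : ℝ) + 1) ^ 2 := by
  rw [dyadicOffset, if_neg (padicValInt_two_ne_zero_iff.mpr n.2), alphaVal]

lemma aplus_eq (n : EvenNZ) : aplus n = n.1 + dyadicOffset n.1 := by
  rw [aplus, dyadicOffset_evenNZ]

lemma aminus_eq (n : EvenNZ) : aminus n = n.1 - dyadicOffset n.1 := by
  rw [aminus, dyadicOffset_evenNZ]

lemma lt_abs_sub_of_notMem_Icc_ceil_floor {y r : ℝ} {n : ℤ}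
    (hn : n ∉ Finset.Icc ⌈y - r⌉ ⌊y + r⌋) : r < |n - y| := by
  rw [Finset.mem_Icc, not_and_or, not_le, not_le, Int.lt_ceil, Int.floor_lt] at hn
  rcases hn with hn | hn
  · rw [abs_sub_comm]; exact lt_abs.mpr (Or.inl (by linarith))
  · exact lt_abs.mpr (Or.inl (by linarith))

lemma card_Icc_ceil_floor_le (y : ℝ) {r : ℝ} (hr : 0 ≤ r) :
    ((Finset.Icc ⌈y - r⌉ ⌊y + r⌋).card : ℝ) ≤ 2 * r + 1 := by
  rw [Int.card_Icc]
  rcases le_total (⌊y + r⌋ + 1 - ⌈y - r⌉) 0 with h | h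
  · rw [Int.toNat_of_nonpos h, Nat.cast_zero]
    linarith
  · have hcast : ((⌊y + r⌋ + 1 - ⌈y - r⌉).toNat : ℝ) = ⌊y + r⌋ + 1 - ⌈y - r⌉ := by
      exact_mod_cast Int.toNat_of_nonneg h
    rw [hcast]
    linarith [Int.floor_le (y + r), Int.le_ceil (y - r)]

noncomputable def latticeSum (φ : ℝ → ℝ) (b : ℤ → ℝ) (x : ℝ) : ℝ :=
  ∑' n : ℤ, φ (x + n + b n)

lemma latticeSum_add_intCast (φ : ℝ → ℝ) (b : ℤ → ℝ) (x : ℝ) (t : ℤ) :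
    latticeSum φ b (x + t) = latticeSum φ (fun n => b (n - t)) x := by
  rw [latticeSum, latticeSum, ← (Equiv.subRight t).tsum_eq]
  congr 1 with n
  simp only [Equiv.subRight_apply, Int.cast_sub]
  ring_nf

section Window

variable {φ : ℝ → ℝ} {b : ℤ → ℝ} {M B : ℝ}

lemma apply_add_eq_zero_of_notMem_Icc (hM : ∀ u, M ≤ |u| → φ u = 0) (hb : ∀ n, |b n| ≤ B)
    {x : ℝ} {n : ℤ} (hn : n ∉ Finset.Icc ⌈-x - (M + B)⌉ ⌊-x + (M + B)⌋) :
    φ (x + n + b n) = 0 := by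
  have hfar := lt_abs_sub_of_notMem_Icc_ceil_floor hn
  rw [sub_neg_eq_add, add_comm (n : ℝ)] at hfar
  apply hM
  have := abs_add_le (x + n + b n) (-b n)
  rw [add_neg_cancel_right, abs_neg] at this
  linarith [hb n]

lemma latticeSum_eq_sum_Icc (hM : ∀ u, M ≤ |u| → φ u = 0) (hb : ∀ n, |b n| ≤ B) (x : ℝ) :
    latticeSum φ b x = ∑ n ∈ Finset.Icc ⌈-x - (M + B)⌉ ⌊-x + (M + B)⌋, φ (x + n + b n) :=
  tsum_eq_sum fun _ hn => apply_add_eq_zero_of_notMem_Icc hM hb hn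

lemma summable_latticeSum (hM : ∀ u, M ≤ |u| → φ u = 0) (hb : ∀ n, |b n| ≤ B) (x : ℝ) :
    Summable fun n : ℤ => φ (x + n + b n) :=
  summable_of_ne_finset_zero fun _ hn => apply_add_eq_zero_of_notMem_Icc hM hb hn

end Window

lemma exists_forall_abs_latticeSum_sub_lt {φ : ℝ → ℝ} (hc : Continuous φ)
    (hs : HasCompactSupport φ) (B : ℝ) {ε : ℝ} (hε : 0 < ε) :
    ∃ δ > 0, ∀ b b' : ℤ → ℝ, (∀ n, |b n| ≤ B) → (∀ n, |b' n| ≤ B) → (∀ n, |b n - b' n| < δ) →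
      ∀ x, |latticeSum φ b x - latticeSum φ b' x| < ε := by
  obtain ⟨M, hM₀, hM⟩ := hs.exists_pos_le_norm
  obtain ⟨N, hN⟩ := exists_nat_gt (2 * (M + |B|) + 1)
  have hN₀ : (0 : ℝ) < N := by linarith [abs_nonneg B]
  obtain ⟨δ, hδ, hφδ⟩ :=
    Metric.uniformContinuous_iff.mp (hs.uniformContinuous_of_continuous hc) (ε / N) (by positivity)
  refine ⟨δ, hδ, fun b b' hb hb' hbb' x => ?_⟩
  rw [latticeSum_eq_sum_Icc hM hb, latticeSum_eq_sum_Icc hM hb', ← Finset.sum_sub_distrib]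
  have hterm : ∀ n : ℤ, |φ (x + n + b n) - φ (x + n + b' n)| ≤ ε / N := fun n => by
    refine (hφδ ?_).le
    rw [Real.dist_eq, add_sub_add_left_eq_sub]
    exact hbb' n
  have hcard := card_Icc_ceil_floor_le (-x) (add_nonneg hM₀.le ((abs_nonneg _).trans (hb 0)))
  calc |∑ n ∈ Finset.Icc ⌈-x - (M + B)⌉ ⌊-x + (M + B)⌋, (φ (x + n + b n) - φ (x + n + b' n))|
      ≤ ∑ n ∈ Finset.Icc ⌈-x - (M + B)⌉ ⌊-x + (M + B)⌋, |φ (x + n + b n) - φ (x + n + b' n)| :=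
        Finset.abs_sum_le_sum_abs _ _
    _ ≤ (Finset.Icc ⌈-x - (M + B)⌉ ⌊-x + (M + B)⌋).card * (ε / N) := by
        rw [← nsmul_eq_mul, ← Finset.sum_const]
        exact Finset.sum_le_sum fun n _ => hterm n
    _ < N * (ε / N) := by
        gcongr
        exact_mod_cast hcard.trans_lt (hN.trans_le' (by linarith [le_abs_self B]))
    _ = ε := by field_simp

lemma relativelyDense_of_intMul_mem {S : Set ℝ} {T : ℤ} (hT : 0 < T)
    (hS : ∀ k : ℤ, ((k * T : ℤ) : ℝ) ∈ S) : RelativelyDense S := by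
  have hT' : (0 : ℝ) < T := mod_cast hT
  refine ⟨T, hT', fun c => ⟨_, hS ⌊c / T⌋, ?_⟩⟩
  have h₁ := Int.floor_le (c / T)
  have h₂ := Int.lt_floor_add_one (c / T)
  rw [le_div_iff₀ hT'] at h₁
  rw [div_lt_iff₀ hT'] at h₂
  rw [Real.dist_eq, abs_sub_comm, abs_lt]
  push_cast
  constructor <;> nlinarith

lemma tsum_evenNZ_eq_latticeSum_sub {φ : ℝ → ℝ} (hs : HasCompactSupport φ) (x : ℝ) :
    ∑' n : EvenNZ, (φ (x + aplus n) - φ (x + aminus n)) =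
      latticeSum φ dyadicOffset x - latticeSum φ (-dyadicOffset) x := by
  obtain ⟨M, -, hM⟩ := hs.exists_pos_le_norm
  have hb : ∀ n, |dyadicOffset n| ≤ 1 / 4 := abs_dyadicOffset_le
  have hb' : ∀ n, |(-dyadicOffset) n| ≤ 1 / 4 := by simpa using hb
  rw [latticeSum, latticeSum,
    ← (summable_latticeSum hM hb x).tsum_sub (summable_latticeSum hM hb' x),
    ← tsum_subtype_eq_of_support_subset (s := {n : ℤ | n ≠ 0 ∧ 2 ∣ n})]
  · refine tsum_congr fun n => ?_
    rw [aplus_eq, aminus_eq, Pi.neg_apply, ← add_assoc, ← sub_eq_add_neg, add_sub_assoc]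
  · intro n hn
    by_contra h
    simp [dyadicOffset_eq_zero h] at hn

lemma exists_one_div_add_one_sq_lt {δ : ℝ} (hδ : 0 < δ) : ∃ L : ℕ, 1 / ((L : ℝ) + 1) ^ 2 < δ := by
  obtain ⟨L, hL⟩ := exists_nat_one_div_lt hδ
  refine ⟨L, lt_of_le_of_lt ?_ hL⟩
  gcongr
  exact le_self_pow₀ (by linarith [L.cast_nonneg (α := ℝ)]) two_ne_zero

theorem almostPeriodic_signedSum {φ : ℝ → ℝ} (hc : Continuous φ) (hs : HasCompactSupport φ) :
    AlmostPeriodic fun x => ∑' n : EvenNZ, (φ (x + aplus n) - φ (x + aminus n)) := by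
  simp only [tsum_evenNZ_eq_latticeSum_sub hs]
  intro ε hε
  obtain ⟨δ, hδ, hclose⟩ := exists_forall_abs_latticeSum_sub_lt hc hs (1 / 4) (half_pos hε)
  obtain ⟨L, hL⟩ := exists_one_div_add_one_sq_lt hδ
  refine relativelyDense_of_intMul_mem (T := 2 ^ L) (by positivity) fun k x => ?_
  have hshift : ∀ b : ℤ → ℝ, (∀ n, |b n| ≤ 1 / 4) →
      (∀ n, |b (n - k * 2 ^ L) - b n| ≤ 1 / ((L : ℝ) + 1) ^ 2) →
      |latticeSum φ b (x + ↑(k * 2 ^ L)) - latticeSum φ b x| < ε / 2 := fun b hb hbt => by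
    rw [latticeSum_add_intCast]
    exact hclose _ _ (fun n => hb _) hb (fun n => (hbt n).trans_lt hL) x
  have h₁ := hshift dyadicOffset abs_dyadicOffset_le
    (abs_dyadicOffset_sub_le (dvd_mul_left _ _))
  have h₂ := hshift (-dyadicOffset) (by simpa using abs_dyadicOffset_le) fun n => by
    simpa [abs_sub_comm, neg_add_eq_sub] using abs_dyadicOffset_sub_le (dvd_mul_left _ k) n
  calc _ = |(latticeSum φ dyadicOffset (x + ↑(k * 2 ^ L)) - latticeSum φ dyadicOffset x) -
        (latticeSum φ (-dyadicOffset) (x + ↑(k * 2 ^ L)) - latticeSum φ (-dyadicOffset) x)| := by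
        ring_nf
    _ ≤ _ := abs_sub _ _
    _ < ε / 2 + ε / 2 := add_lt_add h₁ h₂
    _ = ε := add_halves ε

noncomputable def tent (u : ℝ) : ℝ := max 0 (1 - 4 * |u|)

lemma continuous_tent : Continuous tent :=
  continuous_const.max (by fun_prop)

lemma tent_zero : tent 0 = 1 := by norm_num [tent]

lemma tent_eq_zero {u : ℝ} (h : 1 / 4 ≤ |u|) : tent u = 0 :=
  max_eq_left (by linarith)

lemma hasCompactSupport_tent : HasCompactSupport tent :=
  HasCompactSupport.intro (isCompact_closedBall 0 (1 / 4)) fun u hu => tent_eq_zero <| by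
    rw [Metric.mem_closedBall, Real.dist_eq, sub_zero] at hu
    linarith

lemma two_le_abs_intCast {z : ℤ} (h₀ : z ≠ 0) (h₂ : 2 ∣ z) : (2 : ℝ) ≤ |(z : ℝ)| := by
  rw [← Int.cast_abs]
  exact_mod_cast Int.le_of_dvd (abs_pos.mpr h₀) ((dvd_abs _ _).mpr h₂)

section TentSum

variable {b : EvenNZ → ℝ}

lemma tsum_tent_neg_add_eq_one (hb : ∀ n : EvenNZ, |b n - n.1| ≤ 1 / 4) (n : EvenNZ) :
    ∑' m : EvenNZ, tent (-b n + b m) = 1 := by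
  rw [tsum_eq_single n fun m hmn => tent_eq_zero ?_, neg_add_cancel, tent_zero]
  have hsep := two_le_abs_intCast (sub_ne_zero.mpr fun h => hmn (Subtype.ext h))
    (dvd_sub m.2.2 n.2.2)
  push_cast at hsep
  obtain ⟨hm₁, hm₂⟩ := abs_le.mp (hb m)
  obtain ⟨hn₁, hn₂⟩ := abs_le.mp (hb n)
  rcases le_abs'.mp hsep with h | h
  · exact le_abs'.mpr (Or.inl (by linarith))
  · exact le_abs'.mpr (Or.inr (by linarith))

lemma tsum_tent_add_eq_zero (hb : ∀ n : EvenNZ, |b n - n.1| ≤ 1 / 4) {x : ℝ} (hx : |x| < 1) :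
    ∑' m : EvenNZ, tent (x + b m) = 0 := by
  refine (tsum_congr fun m => tent_eq_zero ?_).trans tsum_zero
  have hm := two_le_abs_intCast m.2.1 m.2.2
  obtain ⟨hm₁, hm₂⟩ := abs_le.mp (hb m)
  obtain ⟨hx₁, hx₂⟩ := abs_lt.mp hx
  rcases le_abs'.mp hm with h | h
  · exact le_abs'.mpr (Or.inl (by linarith))
  · exact le_abs'.mpr (Or.inr (by linarith))

lemma exists_abs_add_lt_of_tsum_tent_ne_zero {x : ℝ} (h : ∑' m : EvenNZ, tent (x + b m) ≠ 0) :
    ∃ m, |x + b m| < 1 / 4 := by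
  by_contra! hfar
  exact h ((tsum_congr fun m => tent_eq_zero (hfar m)).trans tsum_zero)

theorem not_almostPeriodic_tsum_tent (hb : ∀ n : EvenNZ, |b n - n.1| ≤ 1 / 4) :
    ¬ AlmostPeriodic fun x => ∑' n : EvenNZ, tent (x + b n) := by
  intro h
  obtain ⟨R, -, hdense⟩ := h (1 / 2) one_half_pos
  obtain ⟨τ, hτ, hτR⟩ := hdense (R + 1)
  simp only [Set.mem_ofPred_eq] at hτ
  have hτ₁ : 1 < τ := by
    rw [Real.dist_eq] at hτR
    linarith [(abs_lt.mp hτR).1]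
  let two : EvenNZ := ⟨2, two_ne_zero, dvd_rfl⟩
  have hpeak := hτ (-b two)
  rw [tsum_tent_neg_add_eq_one hb] at hpeak
  obtain ⟨m, hm⟩ := exists_abs_add_lt_of_tsum_tent_ne_zero fun h0 => by
    rw [h0] at hpeak
    norm_num at hpeak
  -- so `τ` lies within `3/4` of the even integer `2 - m`, which is therefore nonzero
  obtain ⟨hm₁, hm₂⟩ := abs_lt.mp hm
  obtain ⟨h2₁, h2₂⟩ := abs_le.mp (show |b two - 2| ≤ 1 / 4 by simpa [two] using hb two)
  obtain ⟨hbm₁, hbm₂⟩ := abs_le.mp (hb m)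
  have hk₀ : 2 - m.1 ≠ 0 := fun h => by
    have : (m.1 : ℝ) = 2 := by exact_mod_cast (sub_eq_zero.mp h).symm
    linarith
  let k : EvenNZ := ⟨2 - m.1, hk₀, dvd_sub dvd_rfl m.2.2⟩
  obtain ⟨hk₁, hk₂⟩ := abs_le.mp (show |b k - (2 - m.1)| ≤ 1 / 4 by simpa [k] using hb k)
  have hhole := hτ (-b k)
  rw [tsum_tent_neg_add_eq_one hb, tsum_tent_add_eq_zero hb (abs_lt.mpr ⟨by linarith, by linarith⟩)]
    at hhole
  norm_num at hhole

end TentSum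

/-- the signed set with mass `+1` at `a_n^+` and `−1` at `a_n^−` is an almost
periodic signed multiple discrete set (its measure is almost periodic in the weak sense),
but neither its positive part `A⁺` nor its negative part `A⁻` is almost periodic. -/
theorem statement18 :
    (∀ φ : ℝ → ℝ, Continuous φ → HasCompactSupport φ →
      AlmostPeriodic fun x => ∑' n : EvenNZ, (φ (x + aplus n) - φ (x + aminus n))) ∧
    ¬ (∀ φ : ℝ → ℝ, Continuous φ → HasCompactSupport φ →
      AlmostPeriodic fun x => ∑' n : EvenNZ, φ (x + aplus n)) ∧
    ¬ (∀ φ : ℝ → ℝ, Continuous φ → HasCompactSupport φ →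
      AlmostPeriodic fun x => ∑' n : EvenNZ, φ (x + aminus n)) := by
  refine ⟨fun φ hc hs => almostPeriodic_signedSum hc hs, fun h => ?_, fun h => ?_⟩
  · refine not_almostPeriodic_tsum_tent (fun n => ?_)
      (h tent continuous_tent hasCompactSupport_tent)
    simpa [aplus_eq] using abs_dyadicOffset_le n.1
  · refine not_almostPeriodic_tsum_tent (fun n => ?_)
      (h tent continuous_tent hasCompactSupport_tent)
    simpa [aminus_eq] using abs_dyadicOffset_le n.1
end
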